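/- Let S be an imprecise minimum on a regular imprecise terrain and x any proxy of S. Then the intersection over all nonempty subsets Q ⊆ S of PsWS(Q) equals PsWS(x). -/

import Mathlib

open scoped Classical
open Set

/-- An imprecise terrain: a finite geometric graph with nodes in the plane,
each node carrying an elevation interval `[low v, high v]`. -/
structure ImpTerrain (V : Type) [Fintype V] [DecidableEq V] where
  pos : V → ℝ × ℝ
  posInj : Function.Injective pos
  adj : V → V → Prop
  adj_symm : ∀ u v, adj u v → adj v u
  adj_irrefl : ∀ v, ¬ adj v v
  low : V → ℝ
  high : V → ℝ

namespace ImpTerrain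

variable {V : Type} [Fintype V] [DecidableEq V]

/-- A realization assigns to each node an elevation within its interval. -/
def IsRealization (T : ImpTerrain V) (R : V → ℝ) : Prop :=
  ∀ v, T.low v ≤ R v ∧ R v ≤ T.high v

/-- Horizontal (plane) distance between two nodes. -/
noncomputable def hdist (T : ImpTerrain V) (u v : V) : ℝ := dist (T.pos u) (T.pos v)

/-- Slope (steepness of descent) of the edge from `p` to `q` in realization `R`. -/
noncomputable def slope (T : ImpTerrain V) (R : V → ℝ) (p q : V) : ℝ :=
  (R p - R q) / T.hdist p q

/-- `q` is a steepest-descent neighbor of `p` in `R`. -/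
def SDN (T : ImpTerrain V) (R : V → ℝ) (p q : V) : Prop :=
  T.adj p q ∧ 0 ≤ T.slope R p q ∧ ∀ r, T.adj p r → T.slope R p r ≤ T.slope R p q

/-- The neighborhood of a set of nodes. -/
def Nbhd (T : ImpTerrain V) (P : Set V) : Set V :=
  {s | s ∉ P ∧ ∃ t ∈ P, T.adj s t}

/-- `u` and `v` are connected by a path staying inside `P`. -/
def ConnIn (T : ImpTerrain V) (P : Set V) (u v : V) : Prop :=
  Relation.ReflTransGen (fun a b => T.adj a b ∧ a ∈ P ∧ b ∈ P) u v

/-- `P` is a local minimum in realization `R`: nonempty, connected, all nodes at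
the same elevation, strictly below its neighborhood. -/
def LocalMin (T : ImpTerrain V) (R : V → ℝ) (P : Set V) : Prop :=
  P.Nonempty ∧ (∀ u ∈ P, ∀ v ∈ P, T.ConnIn P u v) ∧
    (∀ u ∈ P, ∀ v ∈ P, R u = R v) ∧ (∀ u ∈ P, ∀ t ∈ T.Nbhd P, R u < R t)

def InLocalMin (T : ImpTerrain V) (R : V → ℝ) (p : V) : Prop :=
  ∃ P, T.LocalMin R P ∧ p ∈ P

/-- One step of discrete water flow. -/
def FlowStep (T : ImpTerrain V) (R : V → ℝ) (p q : V) : Prop :=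
  (∃ P, T.LocalMin R P ∧ p ∈ P ∧ q ∈ P ∧ T.adj p q) ∨
    (¬ T.InLocalMin R p ∧ T.SDN R p q)

/-- `p ⇝_R q` : water from `p` reaches `q` in realization `R`. -/
def FlowsTo (T : ImpTerrain V) (R : V → ℝ) : V → V → Prop :=
  Relation.ReflTransGen (T.FlowStep R)

/-- The (discrete) watershed of a set of nodes `Q` in realization `R`. -/
def WS (T : ImpTerrain V) (R : V → ℝ) (Q : Set V) : Set V :=
  {p | ∃ q ∈ Q, T.FlowsTo R p q}

/-- The potential watershed of `Q`. -/
def PoWS (T : ImpTerrain V) (Q : Set V) : Set V :=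
  {p | ∃ R, T.IsRealization R ∧ p ∈ T.WS R Q}

/-- A flow path: a simple path following steepest-descent edges that ends in,
and visits all nodes of, a local minimum. -/
def IsFlowPath (T : ImpTerrain V) (R : V → ℝ) (L : List V) : Prop :=
  L.Nodup ∧ L.Chain' (fun p q => T.SDN R p q) ∧
    ∃ P, T.LocalMin R P ∧ (∀ v ∈ P, v ∈ L) ∧ ∃ hne : L ≠ [], L.getLast hne ∈ P

/-- The `Q`-avoiding potential watershed of `S`: nodes having, in some
realization, a flow path to a node of `S` whose portion up to that node
avoids `Q`. -/
def AvWS (T : ImpTerrain V) (Q S : Set V) : Set V :=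
  {p | ∃ R, T.IsRealization R ∧ ∃ L, T.IsFlowPath R L ∧ ∃ s ∈ S,
    ∃ i j : Fin L.length, (i : ℕ) ≤ (j : ℕ) ∧ L.get i = p ∧ L.get j = s ∧
      ∀ k : Fin L.length, (i : ℕ) ≤ (k : ℕ) → (k : ℕ) ≤ (j : ℕ) → L.get k ∉ Q}

/-- The persistent watershed of `Q`. -/
def PsWS (T : ImpTerrain V) (Q : Set V) : Set V :=
  (T.AvWS Q (T.PoWS Q)ᶜ)ᶜ

/-- The core watershed of `Q`: nodes from which every induced flow path leads
to a node of `Q`. -/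
def CoWS (T : ImpTerrain V) (Q : Set V) : Set V :=
  {p | ∀ R, T.IsRealization R → ∀ L, T.IsFlowPath R L →
    ∀ i : Fin L.length, L.get i = p →
      ∃ q ∈ Q, ∃ j : Fin L.length, (i : ℕ) ≤ (j : ℕ) ∧ L.get j = q}

/-- Union of all node sets disjoint from `Q` that form a local minimum in some
realization. -/
def Vmin (T : ImpTerrain V) (Q : Set V) : Set V :=
  ⋃₀ {r | r ∩ Q = ∅ ∧ ∃ R, T.IsRealization R ∧ T.LocalMin R r}

/-- `S` contains a local minimum in every realization. -/
def AlwaysMin (T : ImpTerrain V) (S : Set V) : Prop :=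
  ∀ R, T.IsRealization R → ∃ P, T.LocalMin R P ∧ P ⊆ S

/-- An imprecise minimum: a minimal set containing a local minimum in every
realization. -/
def ImpreciseMin (T : ImpTerrain V) (S : Set V) : Prop :=
  T.AlwaysMin S ∧ ∀ S', S' ⊂ S → ¬ T.AlwaysMin S'

/-- A terrain is regular if every local minimum of the lowermost realization is
an imprecise minimum. -/
def Regular (T : ImpTerrain V) : Prop :=
  ∀ P, T.LocalMin T.low P → T.ImpreciseMin P

/-- A proxy of `S`: a node of `S` from which water can never reach a node
outside `S` in any realization. -/
def IsProxy (T : ImpTerrain V) (S : Set V) (p : V) : Prop :=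
  p ∈ S ∧ ∀ R, T.IsRealization R → ∀ q, q ∉ S → ¬ T.FlowsTo R p q

/-- `R'` is an `ε`-perturbation of `R`. -/
def Perturb (ε : ℝ) (R R' : V → ℝ) : Prop := ∀ v, |R' v - R v| ≤ ε

/-- `S` together with all `ε`-perturbations of its members (`S^ε`). -/
def Enlarge (S : Set (V → ℝ)) (ε : ℝ) : Set (V → ℝ) :=
  S ∪ {R' | ∃ R ∈ S, Perturb ε R R'}

/-- `Π(S)` : flow paths induced by realizations in `S`. -/
def FlowPathsOf (T : ImpTerrain V) (S : Set (V → ℝ)) : Set (List V) :=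
  {L | ∃ R ∈ S, T.IsFlowPath R L}

/-- A flow path is stable with respect to `S`. -/
def StableWrt (T : ImpTerrain V) (S : Set (V → ℝ)) (L : List V) : Prop :=
  ∃ ε > (0 : ℝ), ∃ R ∈ S, ∀ R', Perturb ε R R' → T.IsFlowPath R' L

/-- State of the sweep-plane minimum-removal algorithm. -/
structure SweepState (V : Type) where
  discovered : Set V
  final : V → Option ℝ
  proxies : Set V

def pendingS (st : SweepState V) (v : V) : Prop :=
  v ∈ st.discovered ∧ st.final v = none

/-- Pending component of `v`. -/
def pendComp (T : ImpTerrain V) (st : SweepState V) (v : V) : Set V :=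
  {u | Relation.ReflTransGen (fun a b => T.adj a b ∧ pendingS st a ∧ pendingS st b) v u}

/-- One step of the sweep algorithm, processing a `low` event `(v, false)` or a
`high` event `(v, true)`. -/
noncomputable def sweepStep (T : ImpTerrain V) (st : SweepState V) : V × Bool → SweepState V
  | (v, false) =>
    let st1 : SweepState V := ⟨insert v st.discovered, st.final, st.proxies⟩
    if ∃ u, T.adj v u ∧ (st.final u).isSome = true then
      ⟨st1.discovered,
        fun w => if w ∈ T.pendComp st1 v then some (T.low v) else st.final w,
        st.proxies⟩
    else st1
  | (v, true) =>
    if (st.final v).isSome = true then st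
    else
      ⟨st.discovered,
        fun w =>
          if w ∈ T.pendComp st v then some (sSup (T.low '' T.pendComp st v))
          else st.final w,
        insert v st.proxies⟩

noncomputable def sweepRun (T : ImpTerrain V) (evs : List (V × Bool)) : SweepState V :=
  evs.foldl T.sweepStep ⟨∅, fun _ => none, ∅⟩

/-- Elevation key of an event. -/
def eKey (T : ImpTerrain V) : V × Bool → ℝ
  | (v, false) => T.low v
  | (v, true) => T.high v

/-- A valid event list: all events, each once, sorted by elevation with low
events before high events at equal elevation. -/
def ValidEventList (T : ImpTerrain V) (evs : List (V × Bool)) : Prop :=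
  (∀ v : V, ∀ b : Bool, (v, b) ∈ evs) ∧ evs.Nodup ∧
    evs.Pairwise (fun e1 e2 =>
      T.eKey e1 < T.eKey e2 ∨ (T.eKey e1 = T.eKey e2 ∧ ¬(e1.2 = true ∧ e2.2 = false)))

/-- The realization `M` computed by the sweep algorithm. -/
noncomputable def sweepM (T : ImpTerrain V) (evs : List (V × Bool)) : V → ℝ :=
  fun v => ((T.sweepRun evs).final v).getD (T.high v)

end ImpTerrain

/-! Regularity makes `S` a local minimum of the lowermost realization, and then `PoWS S ⊆ PoWS Q`
for every nonempty `Q ⊆ S`: in a realization `R` draining into `S`, lower `S` to `low`. This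
makes `S` a local minimum that drains into `Q`, while every descent from outside `S` into `S`
only gets steeper and a plateau of `R` either stays flat or now descends into `S`, so water that
reached `S` under `R` still reaches `Q`.

Consequently a flow path ending outside `PoWS Q` never passes the proxy `x` (water from `x`
stays in `S ⊆ PoWS Q`), so each `Q`-avoiding witness for `p ∉ PsWS Q` is an `{x}`-avoiding
witness ending outside `PoWS {x} ⊆ PoWS Q`, i.e. `PsWS {x} ⊆ PsWS Q`. -/

namespace ImpTerrain

variable {V : Type} [Fintype V] [DecidableEq V] {T : ImpTerrain V}

section Slope

variable {R R' : V → ℝ} {p q : V}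

lemma hdist_pos_of_adj (h : T.adj p q) : 0 < T.hdist p q :=
  dist_pos.2 fun hpos => T.adj_irrefl p (T.posInj hpos ▸ h)

lemma slope_nonneg_iff (h : T.adj p q) : 0 ≤ T.slope R p q ↔ R q ≤ R p := by
  rw [slope, le_div_iff₀ (hdist_pos_of_adj h), zero_mul, sub_nonneg]

lemma slope_nonpos_iff (h : T.adj p q) : T.slope R p q ≤ 0 ↔ R p ≤ R q := by
  rw [slope, div_le_iff₀ (hdist_pos_of_adj h), zero_mul, sub_nonpos]

lemma slope_le_slope (h : T.adj p q) (hp : R p ≤ R' p) (hq : R' q ≤ R q) :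
    T.slope R p q ≤ T.slope R' p q :=
  div_le_div_of_nonneg_right (by linarith) (hdist_pos_of_adj h).le

lemma exists_steepest (R : V → ℝ) (h : T.adj p q) :
    ∃ w, T.adj p w ∧ ∀ r, T.adj p r → T.slope R p r ≤ T.slope R p w := by
  obtain ⟨w, hw, hmax⟩ := Finset.exists_max_image {r | T.adj p r} (T.slope R p)
    ⟨q, Finset.mem_filter.2 ⟨Finset.mem_univ q, h⟩⟩
  exact ⟨w, (Finset.mem_filter.1 hw).2,
    fun r hr => hmax r (Finset.mem_filter.2 ⟨Finset.mem_univ r, hr⟩)⟩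

end Slope

section Flow

variable {R : V → ℝ} {P Q : Set V}

lemma LocalMin.lt_of_adj (hP : T.LocalMin R P) {u t : V} (hu : u ∈ P) (ht : t ∉ P)
    (hadj : T.adj u t) : R u < R t :=
  hP.2.2.2 u hu t ⟨ht, u, hu, T.adj_symm u t hadj⟩

lemma LocalMin.subset_of_mem (hP : T.LocalMin R P) {P' : Set V} (hP' : T.LocalMin R P')
    {v : V} (hv : v ∈ P) (hv' : v ∈ P') : P ⊆ P' := by
  intro u hu
  induction hP.2.1 v hv u hu with
  | refl => exact hv'
  | @tail b c _ hbc hb =>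
    by_contra hc
    have := hP'.lt_of_adj (hb hbc.2.1) hc hbc.1
    have := hP.2.2.1 b hbc.2.1 c hbc.2.2
    linarith

lemma LocalMin.flowsTo (hP : T.LocalMin R P) {u v : V} (hu : u ∈ P) (hv : v ∈ P) :
    T.FlowsTo R u v :=
  Relation.ReflTransGen.mono (fun _ _ hab => Or.inl ⟨P, hP, hab.2.1, hab.2.2, hab.1⟩) _ _
    (hP.2.1 u hu v hv)

lemma LocalMin.mem_of_flowsTo (hP : T.LocalMin R P) {u v : V} (hu : u ∈ P)
    (h : T.FlowsTo R u v) : v ∈ P := by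
  induction h with
  | refl => exact hu
  | tail _ hstep hb =>
    rcases hstep with ⟨P', hP', hbP', hcP', -⟩ | ⟨hnot, -⟩
    · exact hP'.subset_of_mem hP hbP' hb hcP'
    · exact absurd ⟨P, hP, hb⟩ hnot

lemma flowStep_of_sdn {p q : V} (h : T.SDN R p q) : T.FlowStep R p q := by
  by_cases hp : T.InLocalMin R p
  · obtain ⟨P, hP, hpP⟩ := hp
    refine Or.inl ⟨P, hP, hpP, ?_, h.1⟩
    by_contra hq
    have := hP.lt_of_adj hpP hq h.1
    have := (slope_nonneg_iff h.1).1 h.2.1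
    linarith
  · exact Or.inr ⟨hp, h⟩

lemma mem_ws_of_flowStep {p q : V} (h : T.FlowStep R p q) (hq : q ∈ T.WS R Q) :
    p ∈ T.WS R Q :=
  let ⟨r, hr, hqr⟩ := hq
  ⟨r, hr, .head h hqr⟩

end Flow

section Lowering

variable {R R' : V → ℝ} {S Q : Set V}

lemma mem_ws_of_sdn_of_le (hle : ∀ v, R v ≤ R' v) (hoff : ∀ v ∉ S, R v = R' v)
    (hSQ : S ⊆ T.WS R Q) {u c : V} (hu : u ∉ S) (h : T.SDN R' u c)
    (hc : c ∈ T.WS R Q) : u ∈ T.WS R Q := by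
  obtain ⟨w, huw, hmax⟩ := exists_steepest R h.1
  have hc_le : T.slope R' u c ≤ T.slope R u c := slope_le_slope h.1 (hoff u hu).ge (hle c)
  by_cases hw : w ∈ S
  · exact mem_ws_of_flowStep
      (flowStep_of_sdn ⟨huw, (h.2.1.trans hc_le).trans (hmax c h.1), hmax⟩) (hSQ hw)
  · have hw_eq : T.slope R u w = T.slope R' u w := by simp only [slope, hoff u hu, hoff w hw]
    refine mem_ws_of_flowStep (flowStep_of_sdn ⟨h.1, h.2.1.trans hc_le, fun r hr => ?_⟩) hc
    calc T.slope R u r ≤ T.slope R u w := hmax r hr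
      _ = T.slope R' u w := hw_eq
      _ ≤ T.slope R' u c := h.2.2 w huw
      _ ≤ T.slope R u c := hc_le

lemma mem_ws_of_adj_of_localMin (hle : ∀ v, R v ≤ R' v) (hoff : ∀ v ∉ S, R v = R' v)
    (hSQ : S ⊆ T.WS R Q) {P : Set V} (hP : T.LocalMin R' P) {v v' : V} (hv : v ∈ P)
    (hvS : v ∉ S) (hv' : v' ∈ P) (hadj : T.adj v v') (hv'Q : v' ∈ T.WS R Q) :
    v ∈ T.WS R Q := by
  obtain ⟨w, hvw, hmax⟩ := exists_steepest R hadj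
  have hRv : R v = R' v := hoff v hvS
  by_cases hdown : R w < R v
  · have hwS : w ∈ S := by
      by_contra hwS
      have : R' v ≤ R' w := by
        by_cases hwP : w ∈ P
        · exact (hP.2.2.1 v hv w hwP).le
        · exact (hP.lt_of_adj hv hwP hvw).le
      rw [hoff w hwS] at hdown
      linarith
    exact mem_ws_of_flowStep
      (flowStep_of_sdn ⟨hvw, (slope_nonneg_iff hvw).2 hdown.le, hmax⟩) (hSQ hwS)
  · have hflat : ∀ r, T.adj v r → T.slope R v r ≤ 0 :=
      fun r hr => (hmax r hr).trans ((slope_nonpos_iff hvw).2 (not_lt.1 hdown))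
    have hv'_eq : R v' = R v :=
      le_antisymm ((hle v').trans_eq ((hP.2.2.1 v' hv' v hv).trans hRv.symm))
        ((slope_nonpos_iff hadj).1 (hflat v' hadj))
    have hzero : T.slope R v v' = 0 := by simp [slope, hv'_eq]
    exact mem_ws_of_flowStep
      (flowStep_of_sdn ⟨hadj, hzero.ge, fun r hr => hzero ▸ hflat r hr⟩) hv'Q

lemma mem_ws_of_localMin (hle : ∀ v, R v ≤ R' v) (hoff : ∀ v ∉ S, R v = R' v)
    (hSQ : S ⊆ T.WS R Q) {P : Set V} (hP : T.LocalMin R' P) {u y : V} (hu : u ∈ P)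
    (hy : y ∈ P) (hyQ : y ∈ T.WS R Q) : u ∈ T.WS R Q := by
  induction hP.2.1 u hu y hy using Relation.ReflTransGen.head_induction_on with
  | refl => exact hyQ
  | @head v v' hstep _ ih =>
    by_cases hvS : v ∈ S
    · exact hSQ hvS
    · exact mem_ws_of_adj_of_localMin hle hoff hSQ hP hstep.2.1 hvS hstep.2.2 hstep.1
        (ih hstep.2.2)

lemma ws_subset_ws_of_le (hle : ∀ v, R v ≤ R' v) (hoff : ∀ v ∉ S, R v = R' v)
    (hSQ : S ⊆ T.WS R Q) : T.WS R' S ⊆ T.WS R Q := by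
  rintro u ⟨y, hy, hflow⟩
  induction hflow using Relation.ReflTransGen.head_induction_on with
  | refl => exact hSQ hy
  | @head u c hstep hflow ih =>
    by_cases hu : u ∈ S
    · exact hSQ hu
    rcases hstep with ⟨P, hP, huP, hcP, -⟩ | ⟨-, hsdn⟩
    · exact mem_ws_of_localMin hle hoff hSQ hP huP (hP.mem_of_flowsTo hcP hflow) (hSQ hy)
    · exact mem_ws_of_sdn_of_le hle hoff hSQ hu hsdn ih

end Lowering

lemma isRealization_low (hle : ∀ v, T.low v ≤ T.high v) : T.IsRealization T.low :=
  fun v => ⟨le_rfl, hle v⟩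

lemma subset_pows (hle : ∀ v, T.low v ≤ T.high v) (Q : Set V) : Q ⊆ T.PoWS Q :=
  fun q hq => ⟨T.low, isRealization_low hle, q, hq, .refl⟩

lemma pows_mono {Q Q' : Set V} (h : Q ⊆ Q') : T.PoWS Q ⊆ T.PoWS Q' :=
  fun _ ⟨R, hR, q, hq, hflow⟩ => ⟨R, hR, q, h hq, hflow⟩

lemma isRealization_piecewise_low (hle : ∀ v, T.low v ≤ T.high v) {R : V → ℝ}
    (hR : T.IsRealization R) (S : Set V) : T.IsRealization (S.piecewise T.low R) := by
  intro v
  by_cases hv : v ∈ S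
  · simp only [piecewise_eq_of_mem _ _ _ hv, le_rfl, hle v, and_self]
  · simp only [piecewise_eq_of_notMem _ _ _ hv, hR v, and_self]

lemma LocalMin.piecewise_low {S : Set V} (hS : T.LocalMin T.low S) {R : V → ℝ}
    (hR : T.IsRealization R) : T.LocalMin (S.piecewise T.low R) S := by
  refine ⟨hS.1, hS.2.1, fun u hu v hv => ?_, fun u hu t ht => ?_⟩
  · rw [piecewise_eq_of_mem _ _ _ hu, piecewise_eq_of_mem _ _ _ hv]
    exact hS.2.2.1 u hu v hv
  · rw [piecewise_eq_of_mem _ _ _ hu, piecewise_eq_of_notMem _ _ _ ht.1]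
    exact (hS.2.2.2 u hu t ht).trans_le (hR t).1

lemma pows_subset_pows_of_localMin_low (hle : ∀ v, T.low v ≤ T.high v) {S Q : Set V}
    (hS : T.LocalMin T.low S) (hQS : Q ⊆ S) (hQ : Q.Nonempty) : T.PoWS S ⊆ T.PoWS Q := by
  rintro p ⟨R, hR, hp⟩
  obtain ⟨q, hq⟩ := hQ
  have hlower : ∀ v, S.piecewise T.low R v ≤ R v := by
    intro v
    by_cases hv : v ∈ S
    · rw [piecewise_eq_of_mem _ _ _ hv]
      exact (hR v).1
    · exact (piecewise_eq_of_notMem _ _ _ hv).le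
  have hSQ : S ⊆ T.WS (S.piecewise T.low R) Q :=
    fun s hs => ⟨q, hq, (hS.piecewise_low hR).flowsTo hs (hQS hq)⟩
  exact ⟨_, isRealization_piecewise_low hle hR S,
    ws_subset_ws_of_le hlower (fun v hv => piecewise_eq_of_notMem _ _ _ hv) hSQ hp⟩

lemma localMin_low_of_regular (hle : ∀ v, T.low v ≤ T.high v) (hreg : T.Regular)
    {S : Set V} (hS : T.ImpreciseMin S) : T.LocalMin T.low S := by
  obtain ⟨P, hP, hPS⟩ := hS.1 T.low (isRealization_low hle)
  obtain rfl | hne := eq_or_ne P S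
  · exact hP
  · exact absurd (hreg P hP).1 (hS.2 P (ssubset_iff_subset_ne.2 ⟨hPS, hne⟩))

lemma IsFlowPath.flowsTo_get {R : V → ℝ} {L : List V} (hL : T.IsFlowPath R L)
    {i j : Fin L.length} (hij : i ≤ j) : T.FlowsTo R (L.get i) (L.get j) :=
  (hL.2.1.imp fun _ _ h => Relation.ReflTransGen.single (flowStep_of_sdn h)).pairwise.rel_get_of_le
    hij

lemma avWS_subset_avWS_singleton {Q Z Z' : Set V} {x : V} (hZ : Z ⊆ Z')
    (hx : ∀ R, T.IsRealization R → ∀ z ∈ Z, ¬ T.FlowsTo R x z) :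
    T.AvWS Q Z ⊆ T.AvWS {x} Z' := by
  rintro p ⟨R, hR, L, hL, s, hs, i, j, hij, rfl, rfl, -⟩
  refine ⟨R, hR, L, hL, _, hZ hs, i, j, hij, rfl, rfl, fun k _ hkj hk => hx R hR _ hs ?_⟩
  rw [← mem_singleton_iff.1 hk]
  exact hL.flowsTo_get hkj

end ImpTerrain

/-- On a regular terrain, the intersection of the persistent watersheds of all
nonempty subsets of an imprecise minimum `S` equals the persistent watershed of
any proxy of `S`. -/
theorem stmt9 {V : Type} [Fintype V] [DecidableEq V] (T : ImpTerrain V)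
    (hle : ∀ v, T.low v ≤ T.high v) (hreg : T.Regular)
    (S : Set V) (hS : T.ImpreciseMin S) (x : V) (hx : T.IsProxy S x) :
    (⋂ Q ∈ {Q : Set V | Q ⊆ S ∧ Q.Nonempty}, T.PsWS Q) = T.PsWS {x} := by
  have hSmin := T.localMin_low_of_regular hle hreg hS
  refine Subset.antisymm (biInter_subset_of_mem ⟨singleton_subset_iff.2 hx.1, x, rfl⟩) ?_
  intro p hp
  refine mem_iInter₂.2 fun Q hQ => ?_
  obtain ⟨hQS, hQ⟩ := hQ
  have hpows := T.pows_subset_pows_of_localMin_low hle hSmin hQS hQ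
  have hx_drains : ∀ R, T.IsRealization R → ∀ z ∈ (T.PoWS Q)ᶜ, ¬ T.FlowsTo R x z :=
    fun R hR z hz hxz =>
      hz (hpows (T.subset_pows hle S (by_contra fun hzS => hx.2 R hR z hzS hxz)))
  exact compl_subset_compl.2 (T.avWS_subset_avWS_singleton
    (compl_subset_compl.2 ((T.pows_mono (singleton_subset_iff.2 hx.1)).trans hpows)) hx_drains) hp
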